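/- arXiv:1206.3603 — 4 statements merged into one kernel-verified Lean document; each statement's English description precedes it below -/
import Mathlib

section
/- For every real t > 0 and every β ∈ (0,1], we have Φ̄(βt) ≤ Φ̄(t)^{β²}. -/
/-!
With `L = -log Φ̄` we have `L 0 = 0` and `L' = 1 / R`, where `R = Φ̄ / (2φ)` is the Mills ratio.
The claim `β² L t ≤ L (β t)` follows from the monotonicity of `s ↦ L (β s) - β² L s` on `[0, ∞)`,
whose derivative is nonnegative as soon as `β s R (β s) ≤ s R s`, i.e. as soon as `s ↦ s R s` is
monotone. Since `R' = s R - 1`, the derivative of `s R s` is `(1 + s²) R s - s`, which is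
nonnegative by Gordon's inequality `R s ≥ s / (1 + s²)`; that inequality holds because
`Φ̄ s - 2 s φ s / (1 + s²)` has derivative `-4 φ s / (1 + s²)²` and tends to `0` at infinity.
-/

/-- `Phi t` is the probability that a standard Gaussian random variable has
absolute value at most `t`. -/
noncomputable def Phi (t : ℝ) : ℝ :=
  (1 / Real.sqrt (2 * Real.pi)) * ∫ x in (-t)..t, Real.exp (-x ^ 2 / 2)

/-- `PhiBar t = 1 - Phi t`. -/
noncomputable def PhiBar (t : ℝ) : ℝ := 1 - Phi t

open Real Set Filter Topology MeasureTheory ProbabilityTheory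

lemma sq_mul_le_apply_mul_of_hasDerivAt {L L' : ℝ → ℝ} {β t : ℝ} (hβ : 0 ≤ β) (ht : 0 ≤ t)
    (hL0 : L 0 = 0) (hL : ∀ s, HasDerivAt L (L' s) s)
    (hL' : ∀ s, 0 < s → β * L' s ≤ L' (β * s)) :
    β ^ 2 * L t ≤ L (β * t) := by
  set G := fun s => L (β * s) - β ^ 2 * L s
  have hG s : HasDerivAt G (β * L' (β * s) - β ^ 2 * L' s) s :=
    (((hL (β * s)).comp s ((hasDerivAt_id' s).const_mul β)).sub
      ((hL s).const_mul (β ^ 2))).congr_deriv (by ring)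
  have hmono : MonotoneOn G (Ici 0) := by
    refine monotoneOn_of_hasDerivWithinAt_nonneg (convex_Ici 0)
      (fun s _ => (hG s).continuousAt.continuousWithinAt)
      (fun s _ => (hG s).hasDerivWithinAt) fun s hs => ?_
    rw [interior_Ici] at hs
    nlinarith [hL' s hs]
  have := hmono self_mem_Ici ht ht
  simp only [G, mul_zero, hL0] at this
  linarith

local notation "φ" => gaussianPDFReal 0 1

lemma gaussianPDFReal_zero_one : φ = fun x => (√(2 * π))⁻¹ * exp (-x ^ 2 / 2) := by
  ext x; simp [gaussianPDFReal]

lemma gaussianPDFReal_zero_one_pos (x : ℝ) : 0 < φ x := gaussianPDFReal_pos 0 1 x one_ne_zero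

lemma continuous_gaussianPDFReal_zero_one : Continuous φ := by
  rw [gaussianPDFReal_zero_one]; fun_prop

lemma hasDerivAt_gaussianPDFReal_zero_one (x : ℝ) : HasDerivAt φ (-x * φ x) x := by
  have h : HasDerivAt (fun y : ℝ => -y ^ 2 / 2) (-x) x := by
    simpa using ((hasDerivAt_pow 2 x).neg.div_const 2).congr_deriv (by ring)
  rw [gaussianPDFReal_zero_one]
  exact (h.exp.const_mul (√(2 * π))⁻¹).congr_deriv (by ring)

lemma tendsto_gaussianPDFReal_zero_one_atTop : Tendsto φ atTop (𝓝 0) := by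
  have h : Tendsto (fun y : ℝ => -y ^ 2 / 2) atTop atBot :=
    (tendsto_neg_atTop_atBot.comp (tendsto_pow_atTop two_ne_zero)).atBot_div_const two_pos
  rw [gaussianPDFReal_zero_one]
  simpa using (tendsto_exp_atBot.comp h).const_mul (√(2 * π))⁻¹

lemma Phi_eq_integral_gaussianPDFReal (t : ℝ) : Phi t = ∫ x in -t..t, φ x := by
  simp only [Phi, gaussianPDFReal_zero_one, intervalIntegral.integral_const_mul, one_div]

lemma PhiBar_zero : PhiBar 0 = 1 := by simp [PhiBar, Phi]

lemma hasDerivAt_PhiBar (s : ℝ) : HasDerivAt PhiBar (-(2 * φ s)) s := by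
  have hφ := continuous_gaussianPDFReal_zero_one
  have hF u : HasDerivAt (fun u => ∫ x in (0 : ℝ)..u, φ x) (φ u) u :=
    (hφ.integral_hasStrictDerivAt 0 u).hasDerivAt
  have hPhiBar : PhiBar = fun t => 1 - ((∫ x in (0 : ℝ)..t, φ x) - ∫ x in (0 : ℝ)..-t, φ x) := by
    ext t
    rw [PhiBar, Phi_eq_integral_gaussianPDFReal, intervalIntegral.integral_interval_sub_left
      (hφ.intervalIntegrable _ _) (hφ.intervalIntegrable _ _)]
  have hsymm : φ (-s) = φ s := by simp [gaussianPDFReal_zero_one]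
  rw [hPhiBar]
  exact (((hF s).sub ((hF (-s)).comp s (hasDerivAt_neg s))).const_sub 1).congr_deriv
    (by rw [hsymm]; ring)

lemma tendsto_PhiBar_atTop : Tendsto PhiBar atTop (𝓝 0) := by
  have h := intervalIntegral_tendsto_integral (integrable_gaussianPDFReal 0 1)
    tendsto_neg_atTop_atBot tendsto_id
  rw [integral_gaussianPDFReal_eq_one 0 one_ne_zero] at h
  have hPhiBar : PhiBar = fun t => 1 - ∫ x in -t..t, φ x :=
    funext fun t => by rw [PhiBar, Phi_eq_integral_gaussianPDFReal]
  simpa [hPhiBar] using h.const_sub 1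

lemma PhiBar_pos (s : ℝ) : 0 < PhiBar s := by
  have hanti := strictAnti_of_hasDerivAt_neg hasDerivAt_PhiBar
    fun x => by linarith [gaussianPDFReal_zero_one_pos x]
  exact (hanti.antitone.le_of_tendsto tendsto_PhiBar_atTop (s + 1)).trans_lt (hanti (lt_add_one s))

lemma antitone_PhiBar_sub_mul_gaussianPDFReal_div :
    Antitone fun s => PhiBar s - 2 * s * φ s / (1 + s ^ 2) := by
  refine antitone_of_hasDerivAt_nonpos (f' := fun s => -(4 * φ s / (1 + s ^ 2) ^ 2)) (fun s => ?_)
    fun s => neg_nonpos.mpr (by have := gaussianPDFReal_zero_one_pos s; positivity)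
  have hden : HasDerivAt (fun s : ℝ => 1 + s ^ 2) (2 * s) s := by
    simpa using ((hasDerivAt_pow 2 s).const_add 1)
  have hnum := ((hasDerivAt_id' s).const_mul 2).fun_mul (hasDerivAt_gaussianPDFReal_zero_one s)
  refine ((hasDerivAt_PhiBar s).sub (hnum.div hden (by positivity))).congr_deriv ?_
  field_simp
  ring

lemma mul_gaussianPDFReal_div_le_PhiBar (s : ℝ) : 2 * s * φ s / (1 + s ^ 2) ≤ PhiBar s := by
  have hlim : Tendsto (fun s => PhiBar s - 2 * s * φ s / (1 + s ^ 2)) atTop (𝓝 0) := by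
    have hbound : ∀ᶠ s in atTop, 2 * s * φ s / (1 + s ^ 2) ≤ 2 * φ s := by
      filter_upwards [eventually_ge_atTop 0] with s hs
      have := gaussianPDFReal_zero_one_pos s
      rw [div_le_iff₀ (by positivity)]
      nlinarith [sq_nonneg (s - 1)]
    have hnonneg : ∀ᶠ s in atTop, 0 ≤ 2 * s * φ s / (1 + s ^ 2) := by
      filter_upwards [eventually_ge_atTop 0] with s hs
      have := gaussianPDFReal_zero_one_pos s
      positivity
    have h2φ : Tendsto (fun s => 2 * φ s) atTop (𝓝 0) := by
      simpa using tendsto_gaussianPDFReal_zero_one_atTop.const_mul 2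
    simpa using tendsto_PhiBar_atTop.sub
      (tendsto_of_tendsto_of_tendsto_of_le_of_le' tendsto_const_nhds h2φ hnonneg hbound)
  simpa using antitone_PhiBar_sub_mul_gaussianPDFReal_div.le_of_tendsto hlim s

/-- `Φ̄` is a two-sided tail, whence the factor `2`. -/
noncomputable def millsRatio (s : ℝ) : ℝ := PhiBar s / (2 * φ s)

lemma millsRatio_pos (s : ℝ) : 0 < millsRatio s :=
  div_pos (PhiBar_pos s) (by have := gaussianPDFReal_zero_one_pos s; positivity)

/-- Gordon's inequality. -/
lemma div_one_add_sq_le_millsRatio (s : ℝ) : s / (1 + s ^ 2) ≤ millsRatio s := by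
  have := gaussianPDFReal_zero_one_pos s
  rw [millsRatio, le_div_iff₀ (by positivity)]
  calc s / (1 + s ^ 2) * (2 * φ s) = 2 * s * φ s / (1 + s ^ 2) := by ring
    _ ≤ PhiBar s := mul_gaussianPDFReal_div_le_PhiBar s

lemma hasDerivAt_millsRatio (s : ℝ) : HasDerivAt millsRatio (s * millsRatio s - 1) s := by
  have hφ := gaussianPDFReal_zero_one_pos s
  refine ((hasDerivAt_PhiBar s).div ((hasDerivAt_gaussianPDFReal_zero_one s).const_mul 2)
    (by positivity)).congr_deriv ?_
  rw [millsRatio]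
  field_simp
  ring

lemma monotone_mul_millsRatio : Monotone fun s => s * millsRatio s := by
  refine monotone_of_hasDerivAt_nonneg (f' := fun s => (1 + s ^ 2) * millsRatio s - s)
    (fun s => ((hasDerivAt_id' s).fun_mul (hasDerivAt_millsRatio s)).congr_deriv (by ring))
    fun s => ?_
  have h := div_one_add_sq_le_millsRatio s
  rw [div_le_iff₀ (by positivity)] at h
  simp only [Pi.zero_apply]
  linarith

lemma hasDerivAt_neg_log_PhiBar (s : ℝ) :
    HasDerivAt (fun s => -log (PhiBar s)) (millsRatio s)⁻¹ s := by
  refine ((hasDerivAt_PhiBar s).log (PhiBar_pos s).ne').neg.congr_deriv ?_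
  rw [millsRatio, inv_div]
  ring

lemma mul_inv_millsRatio_le {β s : ℝ} (hβ : β ≤ 1) (hs : 0 < s) :
    β * (millsRatio s)⁻¹ ≤ (millsRatio (β * s))⁻¹ := by
  have hmono : β * s * millsRatio (β * s) ≤ s * millsRatio s :=
    monotone_mul_millsRatio (by nlinarith)
  rw [← div_eq_mul_inv, div_le_iff₀ (millsRatio_pos s), inv_mul_eq_div,
    le_div_iff₀ (millsRatio_pos _)]
  nlinarith

theorem phiBar_scaling (t β : ℝ) (ht : 0 < t) (hβ0 : 0 < β) (hβ1 : β ≤ 1) :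
    PhiBar (β * t) ≤ (PhiBar t) ^ (β ^ 2) := by
  have key : β ^ 2 * -log (PhiBar t) ≤ -log (PhiBar (β * t)) :=
    sq_mul_le_apply_mul_of_hasDerivAt hβ0.le ht.le (by simp [PhiBar_zero])
      hasDerivAt_neg_log_PhiBar fun s hs => mul_inv_millsRatio_le hβ1 hs
  rw [← log_le_log_iff (PhiBar_pos _) (rpow_pos_of_pos (PhiBar_pos t) _),
    log_rpow (PhiBar_pos t)]
  linarith
end

section
/- The function x ↦ −x·log(x)/(1−x) is strictly increasing on the interval (0,1). -/
open Real

/- The derivative of `-x log x / (1 - x)` is `(x - 1 - log x) / (1 - x)²`, and its numerator is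
positive away from `x = 1` because `log x < x - 1` (strict concavity of `log`). -/

lemma hasDerivAt_negMulLog_div_one_sub {x : ℝ} (hx₀ : x ≠ 0) (hx₁ : x ≠ 1) :
    HasDerivAt (fun x : ℝ => -x * log x / (1 - x)) ((x - 1 - log x) / (1 - x) ^ 2) x := by
  have hne : 1 - x ≠ 0 := sub_ne_zero.mpr hx₁.symm
  have hden : HasDerivAt (fun x : ℝ => 1 - x) (-1) x := by
    simpa using (hasDerivAt_id x).const_sub 1
  have hnum : HasDerivAt (fun x : ℝ => -x * log x) (-log x - 1) x := hasDerivAt_negMulLog hx₀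
  exact (hnum.fun_div hden hne).congr_deriv (by ring)

lemma sub_one_sub_log_div_sq_pos {x : ℝ} (hx₀ : 0 < x) (hx₁ : x ≠ 1) :
    0 < (x - 1 - log x) / (1 - x) ^ 2 :=
  div_pos (by linarith [log_lt_sub_one_of_pos hx₀ hx₁])
    (sq_pos_of_ne_zero (sub_ne_zero.mpr hx₁.symm))

theorem strictMonoOn_x_rho :
    StrictMonoOn (fun x : ℝ => -x * Real.log x / (1 - x)) (Set.Ioo 0 1) := by
  have hderiv {x : ℝ} (hx : x ∈ Set.Ioo (0 : ℝ) 1) :=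
    hasDerivAt_negMulLog_div_one_sub hx.1.ne' hx.2.ne
  refine strictMonoOn_of_deriv_pos (convex_Ioo 0 1)
    (fun x hx => (hderiv hx).continuousAt.continuousWithinAt) fun x hx => ?_
  rw [interior_Ioo] at hx
  rw [(hderiv hx).deriv]
  exact sub_one_sub_log_div_sq_pos hx.1 hx.2.ne
end

section
/- For every real t > 0, the probability that a standard Gaussian random variable (with respect to the standard Gaussian measure on ℝ) has absolute value greater than t equals Φ̄(t) = 1 − (1/√(2π)) ∫_{-t}^{t} e^{-x²/2} dx, and for all reals T > 0, d ≥ 1 and s ≥ 8, Φ̄(√d·T/2) ≤ Φ̄(√(s·d/8)·T)^{2/s}. -/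
open MeasureTheory ProbabilityTheory

open MeasureTheory ProbabilityTheory Set

noncomputable def gg (x : ℝ) : ℝ := Real.exp (-x ^ 2 / 2)

noncomputable def tailI (t : ℝ) : ℝ := ∫ x in Set.Ioi t, gg x

lemma gg_pos (x : ℝ) : 0 < gg x := Real.exp_pos _

lemma continuous_gg : Continuous gg := by
  unfold gg; fun_prop

lemma integrable_gg : Integrable gg := by
  have h : Integrable (fun x : ℝ => Real.exp (-(1/2) * x ^ 2)) := integrable_exp_neg_mul_sq (by norm_num)
  refine h.congr (by filter_upwards with x; unfold gg; ring_nf)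

lemma integral_gg : ∫ x, gg x = Real.sqrt (2 * Real.pi) := by
  have h := integral_gaussian (1/2)
  simp only [neg_mul] at h
  have : ∫ x : ℝ, gg x = ∫ x : ℝ, Real.exp (-((1/2) * x ^ 2)) := by
    congr 1; ext x; unfold gg; ring_nf
  rw [this, h]
  rw [show (2:ℝ)*Real.pi = Real.pi/(1/2) by ring]

lemma tailI_pos (t : ℝ) : 0 < tailI t := by
  unfold tailI
  apply setIntegral_pos_iff_support_of_nonneg_ae (by filter_upwards with x using (gg_pos x).le)
    (integrable_gg.integrableOn) |>.2
  have : Function.support gg = Set.univ := by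
    ext x; simp [Function.support, (gg_pos x).ne']
  rw [this, Set.univ_inter]
  exact Measure.measure_Ioi_pos _ t

lemma tailI_split {a b : ℝ} (hab : a ≤ b) :
    tailI a = (∫ x in a..b, gg x) + tailI b := by
  unfold tailI
  rw [intervalIntegral.integral_of_le hab,
    ← setIntegral_union (Set.Ioc_disjoint_Ioi le_rfl) measurableSet_Ioi
      integrable_gg.integrableOn integrable_gg.integrableOn,
    Set.Ioc_union_Ioi_eq_Ioi hab]

lemma tailI_le (t : ℝ) : tailI t ≤ Real.sqrt (2 * Real.pi) := by
  rw [← integral_gg]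
  exact setIntegral_le_integral integrable_gg (by filter_upwards with x using (gg_pos x).le)

lemma PhiBar_eq {t : ℝ} (ht : 0 ≤ t) :
    PhiBar t = (2 / Real.sqrt (2 * Real.pi)) * tailI t := by
  have h2pi : (0:ℝ) < Real.sqrt (2 * Real.pi) := by
    positivity
  have hsplit1 : tailI (-t) = (∫ x in (-t)..t, gg x) + tailI t :=
    tailI_split (by linarith)
  have hsym : tailI (-t) = Real.sqrt (2 * Real.pi) - tailI t := by
    have h1 : (∫ x in Set.Iic t, gg x) = tailI (-t) := by
      unfold tailI
      rw [← integral_comp_neg_Iic]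
      congr 1; ext x; unfold gg; ring_nf
    have h2 : (∫ x in Set.Iic t, gg x) + tailI t = Real.sqrt (2 * Real.pi) := by
      unfold tailI
      rw [← integral_gg,
        ← setIntegral_union (Set.Iic_disjoint_Ioi le_rfl) measurableSet_Ioi
          integrable_gg.integrableOn integrable_gg.integrableOn,
        Set.Iic_union_Ioi, setIntegral_univ]
    linarith
  have hint : (∫ x in (-t)..t, gg x) = Real.sqrt (2 * Real.pi) - 2 * tailI t := by
    linarith
  unfold PhiBar Phi
  have : (∫ x in (-t)..t, Real.exp (-x ^ 2 / 2)) = ∫ x in (-t)..t, gg x := rfl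
  rw [this, hint]
  field_simp
  ring

lemma hasDerivAt_tailI (t : ℝ) : HasDerivAt tailI (-(gg t)) t := by
  have hI : HasDerivAt (fun u => ∫ x in (t-1)..u, gg x) (gg t) t := by
    exact intervalIntegral.integral_hasDerivAt_right
      (integrable_gg.intervalIntegrable)
      (continuous_gg.stronglyMeasurableAtFilter _ _)
      continuous_gg.continuousAt
  have h : HasDerivAt (fun u => tailI (t-1) - ∫ x in (t-1)..u, gg x) (-(gg t)) t := by
    simpa using (hI.const_sub (tailI (t-1)))
  refine h.congr_of_eventuallyEq ?_
  filter_upwards [Ioi_mem_nhds (show t - 1 < t by linarith)] with u hu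
  have := tailI_split (le_of_lt hu)
  linarith

lemma continuous_tailI : Continuous tailI :=
  continuous_iff_continuousAt.2 fun t => (hasDerivAt_tailI t).continuousAt

lemma tendsto_gg : Filter.Tendsto gg Filter.atTop (nhds 0) := by
  unfold gg
  apply Real.tendsto_exp_atBot.comp
  have h : Filter.Tendsto (fun x : ℝ => x ^ 2 / 2) Filter.atTop Filter.atTop := by
    apply Filter.Tendsto.atTop_div_const (by norm_num)
    exact Filter.tendsto_pow_atTop (by norm_num)
  have := Filter.tendsto_neg_atTop_atBot.comp h
  simpa [Function.comp_def, neg_div] using this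

lemma mills (a : ℝ) : a / (a ^ 2 + 1) * gg a ≤ tailI a := by
  set M : ℝ → ℝ := fun x => -(x / (x ^ 2 + 1) * gg x) with hM
  set M' : ℝ → ℝ := fun x => gg x * (1 - 2 / (x ^ 2 + 1) ^ 2) with hM'
  have hd : ∀ x : ℝ, HasDerivAt M (M' x) x := by
    intro x
    have hx1 : (0:ℝ) < x ^ 2 + 1 := by positivity
    have h1 : HasDerivAt (fun y : ℝ => y / (y ^ 2 + 1)) ((1 - x ^ 2) / (x ^ 2 + 1) ^ 2) x := by
      have := (hasDerivAt_id x).div ((hasDerivAt_pow 2 x).add_const 1) (by positivity)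
      simp only [id_eq] at this
      refine this.congr_deriv ?_
      field_simp
      ring
    have h2 : HasDerivAt gg (-x * gg x) x := by
      have : HasDerivAt (fun y : ℝ => -y ^ 2 / 2) (-x) x := by
        have := ((hasDerivAt_pow 2 x).neg).div_const 2
        refine this.congr_deriv ?_
        ring
      exact (by simpa [gg, mul_comm] using this.exp : HasDerivAt (fun y => Real.exp (-y ^ 2 / 2)) (-x * gg x) x)
    have := (h1.mul h2).neg
    refine this.congr_deriv ?_
    simp only [hM', gg]
    field_simp
    ring
  have hcontM' : Continuous M' := by
    apply continuous_gg.mul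
    apply continuous_const.sub
    exact continuous_const.div (by fun_prop) (fun x => by positivity)
  have hM'le : ∀ x : ℝ, M' x ≤ gg x := by
    intro x
    simp only [hM']
    nth_rewrite 2 [← mul_one (gg x)]
    refine mul_le_mul_of_nonneg_left ?_ (gg_pos x).le
    have : (0:ℝ) ≤ 2 / (x ^ 2 + 1) ^ 2 := by positivity
    linarith
  have hM'ge : ∀ x : ℝ, -(gg x) ≤ M' x := by
    intro x
    simp only [hM']
    have h3 : 2 / (x ^ 2 + 1) ^ 2 ≤ 2 := by
      rw [div_le_iff₀ (by positivity)]
      nlinarith [sq_nonneg x, sq_nonneg (x ^ 2 + 1 - 1)]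
    nlinarith [gg_pos x]
  have hint : IntegrableOn M' (Set.Ioi a) := by
    refine Integrable.mono integrable_gg hcontM'.aestronglyMeasurable ?_ |>.integrableOn
    filter_upwards with x
    rw [Real.norm_eq_abs, Real.norm_eq_abs, abs_of_pos (gg_pos x), abs_le]
    exact ⟨hM'ge x, hM'le x⟩
  have htend : Filter.Tendsto M Filter.atTop (nhds 0) := by
    apply squeeze_zero_norm' _ tendsto_gg
    filter_upwards [Filter.eventually_ge_atTop (0:ℝ)] with x hx
    simp only [hM, Real.norm_eq_abs, abs_neg, abs_mul, abs_of_pos (gg_pos x)]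
    nth_rewrite 2 [← one_mul (gg x)]
    refine mul_le_mul_of_nonneg_right ?_ (gg_pos x).le
    rw [abs_of_nonneg (by positivity)]
    rw [div_le_one (by positivity)]
    nlinarith [sq_nonneg (x - 1)]
  have hFTC : ∫ x in Set.Ioi a, M' x = a / (a ^ 2 + 1) * gg a := by
    rw [integral_Ioi_of_hasDerivAt_of_tendsto' (fun x _ => hd x) hint htend]
    simp only [hM]
    ring
  rw [← hFTC]
  exact setIntegral_mono_on hint integrable_gg.integrableOn measurableSet_Ioi
    (fun x _ => hM'le x)


lemma haz_le {c t : ℝ} (hc : 1 ≤ c) (ht : 0 < t) :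
    gg (c * t) / tailI (c * t) ≤ c * (gg t / tailI t) := by
  set m : ℝ → ℝ := fun x => -x ^ 2 / 2 - Real.log (tailI x) - Real.log x with hm
  have hder : ∀ x : ℝ, 0 < x →
      HasDerivAt m (-x + gg x / tailI x - 1/x) x := by
    intro x hx
    have h1 : HasDerivAt (fun y : ℝ => -y ^ 2 / 2) (-x) x := by
      have := ((hasDerivAt_pow 2 x).neg).div_const 2
      refine this.congr_deriv ?_
      ring
    have h2 : HasDerivAt (fun y : ℝ => Real.log (tailI y)) (-(gg x) / tailI x) x :=
      (hasDerivAt_tailI x).log (tailI_pos x).ne'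
    have h3 : HasDerivAt Real.log (1/x) x := by
      simpa [one_div] using Real.hasDerivAt_log hx.ne'
    have := (h1.sub h2).sub h3
    refine this.congr_deriv ?_
    ring
  have hanti : AntitoneOn m (Set.Ioi 0) := by
    apply antitoneOn_of_deriv_nonpos (convex_Ioi 0)
    · intro x hx
      exact ((hder x hx).continuousAt).continuousWithinAt
    · intro x hx
      rw [interior_Ioi] at hx
      exact (hder x hx).differentiableAt.differentiableWithinAt
    · intro x hx
      rw [interior_Ioi] at hx
      have hx0 : 0 < x := hx
      rw [(hder x hx0).deriv]
      have hmills := mills x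
      have h1 : gg x / tailI x ≤ x + 1/x := by
        rw [div_le_iff₀ (tailI_pos x)]
        have h2 : 0 < x ^ 2 + 1 := by positivity
        have hxfrac : (x + 1/x) * (x/(x^2+1)) = 1 := by
          field_simp
        have hnn : 0 ≤ x + 1/x := by positivity
        calc gg x = (x + 1/x) * (x / (x ^ 2 + 1) * gg x) := by
              rw [← mul_assoc, hxfrac, one_mul]
            _ ≤ (x + 1/x) * tailI x := mul_le_mul_of_nonneg_left hmills hnn
      linarith
  have hc0 : (0:ℝ) < c := by linarith
  have hct : 0 < c * t := mul_pos hc0 ht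
  have hmle := hanti (Set.mem_Ioi.2 ht) (Set.mem_Ioi.2 hct) (le_mul_of_one_le_left ht.le hc)
  simp only [hm] at hmle
  have hloggg : ∀ x : ℝ, -x ^ 2 / 2 = Real.log (gg x) := by
    intro x; rw [gg, Real.log_exp]
  rw [hloggg t, hloggg (c*t)] at hmle
  have e1 : Real.log (gg (c*t)) - Real.log (tailI (c*t)) - Real.log (c*t)
      ≤ Real.log (gg t) - Real.log (tailI t) - Real.log t := by linarith
  have e2 : Real.log (gg (c*t) / tailI (c*t)) ≤ Real.log (c * (gg t / tailI t)) := by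
    rw [Real.log_div (gg_pos _).ne' (tailI_pos _).ne',
      Real.log_mul hc0.ne' (div_pos (gg_pos _) (tailI_pos _)).ne',
      Real.log_div (gg_pos _).ne' (tailI_pos _).ne']
    have : Real.log (c*t) = Real.log c + Real.log t :=
      Real.log_mul hc0.ne' ht.ne'
    linarith
  exact (Real.log_le_log_iff (div_pos (gg_pos _) (tailI_pos _))
    (mul_pos hc0 (div_pos (gg_pos _) (tailI_pos _)))).1 e2

lemma key_ineq {c u : ℝ} (hc : 1 ≤ c) (hu : 0 < u) :
    (PhiBar u) ^ (c ^ 2) ≤ PhiBar (c * u) := by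
  set K : ℝ := 2 / Real.sqrt (2 * Real.pi) with hK
  have hKpos : 0 < K := by rw [hK]; positivity
  set H : ℝ → ℝ := fun t => Real.log (tailI (c * t)) - c ^ 2 * Real.log (tailI t) with hH
  have hHder : ∀ t : ℝ, 0 < t → HasDerivAt H
      (c ^ 2 * (gg t / tailI t) - c * (gg (c*t) / tailI (c*t))) t := by
    intro t ht
    have h1 : HasDerivAt (fun t : ℝ => tailI (c * t)) (-(gg (c*t)) * c) t :=
      (hasDerivAt_tailI (c*t)).comp t ((hasDerivAt_id t).const_mul c) |>.congr_deriv (by ring)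
    have h2 : HasDerivAt (fun t : ℝ => Real.log (tailI (c * t)))
        ((-(gg (c*t)) * c) / tailI (c*t)) t := h1.log (tailI_pos _).ne'
    have h3 : HasDerivAt (fun t : ℝ => Real.log (tailI t)) (-(gg t) / tailI t) t :=
      (hasDerivAt_tailI t).log (tailI_pos t).ne'
    have := h2.sub (h3.const_mul (c^2))
    refine this.congr_deriv ?_
    field_simp
    ring
  have hmono : MonotoneOn H (Set.Ici 0) := by
    apply monotoneOn_of_deriv_nonneg (convex_Ici 0)
    · apply Continuous.continuousOn
      apply Continuous.sub
      · exact (continuous_tailI.comp (continuous_const.mul continuous_id)).log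
          (fun x => (tailI_pos _).ne')
      · exact continuous_const.mul (continuous_tailI.log (fun x => (tailI_pos _).ne'))
    · intro x hx
      rw [interior_Ici] at hx
      exact (hHder x hx).differentiableAt.differentiableWithinAt
    · intro x hx
      rw [interior_Ici] at hx
      have hx0 : 0 < x := hx
      rw [(hHder x hx0).deriv]
      have h1 := haz_le hc hx0
      have h2 : 0 < gg x / tailI x := div_pos (gg_pos x) (tailI_pos x)
      nlinarith
  have hH0 : H 0 ≤ H u := by
    apply hmono (Set.mem_Ici.2 le_rfl) (Set.mem_Ici.2 hu.le) hu.le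
  -- PhiBar 0 = 1
  have hPhiBar0 : PhiBar 0 = 1 := by
    unfold PhiBar Phi
    simp
  have hPB : ∀ t : ℝ, 0 ≤ t → PhiBar t = K * tailI t := fun t ht => PhiBar_eq ht
  have hK0 : Real.log K + Real.log (tailI 0) = 0 := by
    have : K * tailI 0 = 1 := by rw [← hPB 0 le_rfl, hPhiBar0]
    rw [← Real.log_mul hKpos.ne' (tailI_pos 0).ne', this, Real.log_one]
  have hcu : 0 < c * u := mul_pos (by linarith) hu
  have hlog : c ^ 2 * Real.log (PhiBar u) ≤ Real.log (PhiBar (c * u)) := by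
    rw [hPB u hu.le, hPB (c*u) hcu.le,
      Real.log_mul hKpos.ne' (tailI_pos _).ne',
      Real.log_mul hKpos.ne' (tailI_pos _).ne']
    simp only [hH] at hH0
    simp only [mul_zero] at hH0
    have hc2 : 1 ≤ c ^ 2 := by nlinarith
    nlinarith [hH0, hK0]
  have hPBu : 0 < PhiBar u := by rw [hPB u hu.le]; exact mul_pos hKpos (tailI_pos u)
  have hPBcu : 0 < PhiBar (c*u) := by rw [hPB _ hcu.le]; exact mul_pos hKpos (tailI_pos _)
  calc PhiBar u ^ (c ^ 2) = Real.exp (Real.log (PhiBar u) * c ^ 2) :=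
        Real.rpow_def_of_pos hPBu _
    _ ≤ Real.exp (Real.log (PhiBar (c*u))) := by
        apply Real.exp_le_exp.2
        rw [mul_comm]
        exact hlog
    _ = PhiBar (c * u) := Real.exp_log hPBcu

lemma part1 (t : ℝ) (ht : 0 < t) :
    gaussianReal 0 1 {x : ℝ | t < |x|} = ENNReal.ofReal (PhiBar t) := by
  have hset : {x : ℝ | t < |x|} = (Set.Icc (-t) t)ᶜ := by
    ext x
    simp [Set.mem_Icc, ← abs_le, not_le]
  have hv : (1 : NNReal) ≠ 0 := one_ne_zero
  have hInt : gaussianReal 0 1 (Set.Icc (-t) t) = ENNReal.ofReal (Phi t) := by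
    rw [gaussianReal_apply_eq_integral _ hv]
    congr 1
    rw [integral_Icc_eq_integral_Ioc, ← intervalIntegral.integral_of_le (by linarith)]
    unfold Phi
    rw [← intervalIntegral.integral_const_mul]
    congr 1
    ext x
    simp only [gaussianPDFReal]
    norm_num
  have hPhi_nonneg : 0 ≤ Phi t := by
    unfold Phi
    apply mul_nonneg (by positivity)
    apply intervalIntegral.integral_nonneg (by linarith)
    intro x _
    positivity
  have hcompl := measure_compl (μ := gaussianReal 0 1) (s := Set.Icc (-t) t)
    measurableSet_Icc (measure_ne_top _ _)
  rw [hset, hcompl, hInt, measure_univ]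
  rw [show PhiBar t = 1 - Phi t from rfl, ENNReal.ofReal_sub _ hPhi_nonneg]
  simp

theorem gaussian_tail_and_scaling :
    (∀ t : ℝ, 0 < t →
      gaussianReal 0 1 {x : ℝ | t < |x|} = ENNReal.ofReal (PhiBar t)) ∧
    (∀ T d s : ℝ, 0 < T → 1 ≤ d → 8 ≤ s →
      PhiBar (Real.sqrt d * T / 2)
        ≤ (PhiBar (Real.sqrt (s * d / 8) * T)) ^ (2 / s)) := by
  constructor
  · exact part1
  · intro T d s hT hd hs
    set u : ℝ := Real.sqrt d * T / 2 with hu_def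
    set c : ℝ := Real.sqrt (s / 2) with hc_def
    have hs0 : (0:ℝ) < s := by linarith
    have hd0 : (0:ℝ) < d := by linarith
    have hu : 0 < u := by
      rw [hu_def]
      have : 0 < Real.sqrt d := Real.sqrt_pos.2 hd0
      positivity
    have hc : 1 ≤ c := by
      rw [hc_def, show (1:ℝ) = Real.sqrt 1 from (Real.sqrt_one).symm]
      apply Real.sqrt_le_sqrt
      linarith
    have hc2 : c ^ 2 = s / 2 := Real.sq_sqrt (by linarith)
    have harg : Real.sqrt (s * d / 8) * T = c * u := by
      rw [hc_def, hu_def]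
      rw [show s * d / 8 = (s/2) * (d/4) by ring,
        Real.sqrt_mul (by linarith) (d/4),
        show d / 4 = (Real.sqrt d / 2) ^ 2 by
          rw [div_pow, Real.sq_sqrt hd0.le]; norm_num,
        Real.sqrt_sq (by positivity)]
      ring
    rw [harg]
    have hkey := key_ineq hc hu
    have hexp : 2 / s = (c ^ 2)⁻¹ := by
      rw [hc2]
      field_simp
    rw [hexp]
    have hPBu : 0 ≤ PhiBar u := by
      rw [PhiBar_eq hu.le]
      have := tailI_pos u
      positivity
    calc PhiBar u = (PhiBar u ^ (c ^ 2)) ^ (c ^ 2)⁻¹ := by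
          rw [← Real.rpow_mul hPBu, mul_inv_cancel₀ (by positivity), Real.rpow_one]
      _ ≤ (PhiBar (c * u)) ^ (c ^ 2)⁻¹ := by
          apply Real.rpow_le_rpow (Real.rpow_nonneg hPBu _) hkey (by positivity)
end

section
/- There exists a real number β₀ with 1.263282 < β₀ < 1.263283 such that sup_{t ≥ 0} 2·Φ(β₀·t)·e^{-t²/2} = 1. -/
/-- `g β = sup_{t ≥ 0} 2 Φ(β t) e^{-t²/2}`. -/
noncomputable def g (β : ℝ) : ℝ :=
  sSup ((fun t : ℝ => 2 * Phi (β * t) * Real.exp (-t ^ 2 / 2)) '' Set.Ici 0)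

open Real Set Finset Nat

lemma hasDerivAt_sum_range_neg_pow_div_factorial (n : ℕ) (y : ℝ) :
    HasDerivAt (fun y : ℝ => ∑ k ∈ range (n + 1), (-y) ^ k / k !)
      (-∑ k ∈ range n, (-y) ^ k / k !) y := by
  induction n with
  | zero => simpa using hasDerivAt_const y (1 : ℝ)
  | succ n ih =>
    simp only [sum_range_succ _ (n + 1)]
    refine (ih.add (((hasDerivAt_neg y).pow (n + 1)).div_const ((n + 1)! : ℝ))).congr_deriv ?_
    rw [sum_range_succ, Nat.factorial_succ]
    push_cast
    field_simp
    ring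

/- The remainder `exp (-y) - ∑ k < n + 1, …` vanishes at `0` and its derivative is minus the
previous remainder, so the signs alternate. -/
lemma neg_one_pow_mul_exp_neg_sub_sum_nonneg (n : ℕ) {y : ℝ} (hy : 0 ≤ y) :
    0 ≤ (-1) ^ n * (exp (-y) - ∑ k ∈ range n, (-y) ^ k / k !) := by
  induction n generalizing y with
  | zero => simpa using (exp_pos _).le
  | succ n ih =>
    have hderiv (x : ℝ) : HasDerivAt
        (fun y => (-1) ^ (n + 1) * (exp (-y) - ∑ k ∈ range (n + 1), (-y) ^ k / k !))
        ((-1) ^ n * (exp (-x) - ∑ k ∈ range n, (-x) ^ k / k !)) x :=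
      ((((hasDerivAt_neg x).exp).sub
        (hasDerivAt_sum_range_neg_pow_div_factorial n x)).const_mul _).congr_deriv (by ring)
    have hmono := monotoneOn_of_hasDerivWithinAt_nonneg (convex_Ici 0)
      (continuous_iff_continuousAt.2 fun x => (hderiv x).continuousAt).continuousOn
      (fun x _ => (hderiv x).hasDerivWithinAt)
      (fun x hx => ih (interior_subset hx : (0 : ℝ) ≤ x))
    simpa [sum_range_succ'] using hmono self_mem_Ici hy hy

lemma exp_neg_le_sum_range_odd (m : ℕ) {y : ℝ} (hy : 0 ≤ y) :
    exp (-y) ≤ ∑ k ∈ range (2 * m + 1), (-y) ^ k / k ! := by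
  have := neg_one_pow_mul_exp_neg_sub_sum_nonneg (2 * m + 1) hy
  rw [pow_succ, pow_mul] at this
  norm_num at this
  linarith

lemma sum_range_even_le_exp_neg (m : ℕ) {y : ℝ} (hy : 0 ≤ y) :
    ∑ k ∈ range (2 * m), (-y) ^ k / k ! ≤ exp (-y) := by
  have := neg_one_pow_mul_exp_neg_sub_sum_nonneg (2 * m) hy
  rw [pow_mul] at this
  norm_num at this
  linarith

noncomputable def gaussIntegral (u : ℝ) : ℝ := ∫ x in (-u)..u, exp (-x ^ 2 / 2)

noncomputable def gaussTaylor (n : ℕ) (u : ℝ) : ℝ :=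
  ∑ k ∈ range n, (-1 / 2) ^ k / k ! * (u ^ (2 * k + 1) / (2 * k + 1))

lemma integral_sum_range_eq_gaussTaylor (n : ℕ) (u : ℝ) :
    ∫ x in (-u)..u, ∑ k ∈ range n, (-(x ^ 2 / 2)) ^ k / k ! = 2 * gaussTaylor n u := by
  rw [intervalIntegral.integral_finsetSum fun k _ => by
    apply Continuous.intervalIntegrable; fun_prop, gaussTaylor, mul_sum]
  refine sum_congr rfl fun k _ => ?_
  have hterm : (fun x : ℝ => (-(x ^ 2 / 2)) ^ k / k !) =
      fun x => (-1 / 2 : ℝ) ^ k / k ! * x ^ (2 * k) := by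
    funext x; rw [pow_mul]; ring
  rw [hterm, intervalIntegral.integral_const_mul, integral_pow,
    Odd.neg_pow (odd_two_mul_add_one k)]
  push_cast
  ring

lemma intervalIntegrable_exp_neg_sq_half (a b : ℝ) :
    IntervalIntegrable (fun x : ℝ => exp (-x ^ 2 / 2)) MeasureTheory.volume a b := by
  apply Continuous.intervalIntegrable; fun_prop

lemma gaussIntegral_le_gaussTaylor (m : ℕ) {u : ℝ} (hu : 0 ≤ u) :
    gaussIntegral u ≤ 2 * gaussTaylor (2 * m + 1) u := by
  rw [gaussIntegral, ← integral_sum_range_eq_gaussTaylor]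
  refine intervalIntegral.integral_mono_on (by linarith) (intervalIntegrable_exp_neg_sq_half _ _)
    (by apply Continuous.intervalIntegrable; fun_prop) fun x _ => ?_
  rw [neg_div]
  exact exp_neg_le_sum_range_odd m (by positivity)

lemma gaussTaylor_le_gaussIntegral (m : ℕ) {u : ℝ} (hu : 0 ≤ u) :
    2 * gaussTaylor (2 * m) u ≤ gaussIntegral u := by
  rw [gaussIntegral, ← integral_sum_range_eq_gaussTaylor]
  refine intervalIntegral.integral_mono_on (by linarith)
    (by apply Continuous.intervalIntegrable; fun_prop) (intervalIntegrable_exp_neg_sq_half _ _)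
    fun x _ => ?_
  rw [neg_div]
  exact sum_range_even_le_exp_neg m (by positivity)

lemma gaussIntegral_sub (u v : ℝ) :
    gaussIntegral v - gaussIntegral u = 2 * ∫ x in u..v, exp (-x ^ 2 / 2) := by
  have hreflect : ∫ x in (-v)..(-u), exp (-x ^ 2 / 2) = ∫ x in u..v, exp (-x ^ 2 / 2) := by
    rw [← intervalIntegral.integral_comp_neg]
    simp only [neg_sq]
  have hI := intervalIntegrable_exp_neg_sq_half
  rw [gaussIntegral, gaussIntegral,
    ← intervalIntegral.integral_add_adjacent_intervals (hI (-v) u) (hI u v),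
    ← intervalIntegral.integral_add_adjacent_intervals (hI (-v) (-u)) (hI (-u) u), hreflect]
  ring

lemma gaussIntegral_pos {u : ℝ} (hu : 0 < u) : 0 < gaussIntegral u :=
  intervalIntegral.intervalIntegral_pos_of_pos_on (intervalIntegrable_exp_neg_sq_half _ _)
    (fun x _ => exp_pos _) (by linarith)

lemma gaussIntegral_mono {u v : ℝ} (huv : u ≤ v) : gaussIntegral u ≤ gaussIntegral v := by
  have := intervalIntegral.integral_nonneg (μ := MeasureTheory.volume) huv
    fun x _ => (exp_pos (-x ^ 2 / 2)).le
  linarith [gaussIntegral_sub u v]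

lemma integral_exp_neg_sq_half_le {u v : ℝ} (hu : 0 ≤ u) (hv : 0 ≤ v) :
    ∫ x in u..v, exp (-x ^ 2 / 2) ≤ exp (-u ^ 2 / 2) * (v - u) := by
  rcases le_total u v with huv | hvu
  · calc ∫ x in u..v, exp (-x ^ 2 / 2) ≤ ∫ _ in u..v, exp (-u ^ 2 / 2) :=
          intervalIntegral.integral_mono_on huv (intervalIntegrable_exp_neg_sq_half _ _)
            intervalIntegrable_const fun x hx => exp_le_exp.2 (by nlinarith [hx.1])
      _ = exp (-u ^ 2 / 2) * (v - u) := by simp [mul_comm]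
  · rw [intervalIntegral.integral_symm]
    have : ∫ _ in v..u, exp (-u ^ 2 / 2) ≤ ∫ x in v..u, exp (-x ^ 2 / 2) :=
      intervalIntegral.integral_mono_on hvu intervalIntegrable_const
        (intervalIntegrable_exp_neg_sq_half _ _) fun x hx =>
          exp_le_exp.2 (by nlinarith [hx.1, hx.2])
    simp only [intervalIntegral.integral_const, smul_eq_mul] at this
    nlinarith

lemma gaussIntegral_le_tangent {u v : ℝ} (hu : 0 ≤ u) (hv : 0 ≤ v) :
    gaussIntegral v ≤ gaussIntegral u + 2 * exp (-u ^ 2 / 2) * (v - u) := by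
  linarith [gaussIntegral_sub u v, integral_exp_neg_sq_half_le hu hv]

lemma mul_exp_neg_sq_half_le_one (t : ℝ) : t * exp (-t ^ 2 / 2) ≤ 1 := by
  have hle : t ≤ exp (t ^ 2 / 2) := by linarith [add_one_le_exp (t ^ 2 / 2), sq_nonneg (t - 1)]
  rw [neg_div, exp_neg, ← div_eq_mul_inv, div_le_one (exp_pos _)]
  exact hle

lemma two_le_sqrt_two_pi : 2 ≤ √(2 * π) :=
  (le_sqrt zero_le_two (by positivity)).2 (by linarith [pi_gt_three])

noncomputable def h (β t : ℝ) : ℝ := 2 * Phi (β * t) * exp (-t ^ 2 / 2)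

lemma h_eq (β t : ℝ) : h β t = 2 / √(2 * π) * gaussIntegral (β * t) * exp (-t ^ 2 / 2) := by
  rw [h, Phi, gaussIntegral]; ring

lemma h_mono {β₁ β₂ t : ℝ} (hβ : β₁ ≤ β₂) (ht : 0 ≤ t) : h β₁ t ≤ h β₂ t := by
  simp only [h_eq]
  gcongr
  exact gaussIntegral_mono (mul_le_mul_of_nonneg_right hβ ht)

lemma h_le_add {β₁ β₂ t : ℝ} (hβ₁ : 0 ≤ β₁) (hβ : β₁ ≤ β₂) (ht : 0 ≤ t) :
    h β₂ t ≤ h β₁ t + 2 * (β₂ - β₁) := by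
  have hI : gaussIntegral (β₂ * t) ≤ gaussIntegral (β₁ * t) + 2 * ((β₂ - β₁) * t) := by
    have := gaussIntegral_le_tangent (mul_nonneg hβ₁ ht) (mul_nonneg (hβ₁.trans hβ) ht)
    have hexp : exp (-(β₁ * t) ^ 2 / 2) ≤ 1 := exp_le_one_iff.2 (by nlinarith)
    nlinarith [mul_nonneg (sub_nonneg.2 hβ) ht]
  have hs := two_le_sqrt_two_pi
  have hdecay := mul_exp_neg_sq_half_le_one t
  calc h β₂ t
      ≤ 2 / √(2 * π) * (gaussIntegral (β₁ * t) + 2 * ((β₂ - β₁) * t)) * exp (-t ^ 2 / 2) := by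
        rw [h_eq]; gcongr
    _ = h β₁ t + 4 / √(2 * π) * (β₂ - β₁) * (t * exp (-t ^ 2 / 2)) := by rw [h_eq]; ring
    _ ≤ h β₁ t + 4 / 2 * (β₂ - β₁) * 1 := by gcongr
    _ = h β₁ t + 2 * (β₂ - β₁) := by ring

lemma h_le_two_mul {β t : ℝ} (hβ : 0 ≤ β) (ht : 0 ≤ t) : h β t ≤ 2 * β := by
  simpa [h, Phi] using h_le_add le_rfl hβ ht

lemma h_le_g {β t : ℝ} (hβ : 0 ≤ β) (ht : 0 ≤ t) : h β t ≤ g β :=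
  le_csSup ⟨2 * β, forall_mem_image.2 fun _ ht => h_le_two_mul hβ ht⟩ (mem_image_of_mem _ ht)

lemma g_le_of_forall_h_le {β c : ℝ} (H : ∀ t, 0 ≤ t → h β t ≤ c) : g β ≤ c :=
  csSup_le (image_nonempty.2 nonempty_Ici) (forall_mem_image.2 H)

lemma g_mono {β₁ β₂ : ℝ} (hβ₁ : 0 ≤ β₁) (hβ : β₁ ≤ β₂) : g β₁ ≤ g β₂ :=
  g_le_of_forall_h_le fun _ ht => (h_mono hβ ht).trans (h_le_g (hβ₁.trans hβ) ht)

lemma g_le_add {β₁ β₂ : ℝ} (hβ₁ : 0 ≤ β₁) (hβ : β₁ ≤ β₂) : g β₂ ≤ g β₁ + 2 * (β₂ - β₁) :=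
  g_le_of_forall_h_le fun _ ht => (h_le_add hβ₁ hβ ht).trans (by linarith [h_le_g hβ₁ ht])

lemma lipschitzOnWith_g : LipschitzOnWith 2 g (Ici 0) := by
  refine LipschitzOnWith.of_le_add_mul 2 fun β₁ hβ₁ β₂ hβ₂ => ?_
  rcases le_total β₁ β₂ with hβ | hβ
  · have : (0 : ℝ) ≤ (2 : NNReal) * dist β₁ β₂ := by positivity
    linarith [g_mono hβ₁ hβ]
  · rw [Real.dist_eq, abs_of_nonneg (sub_nonneg.2 hβ)]
    exact_mod_cast g_le_add hβ₂ hβ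

lemma affine_mul_exp_neg_sq_half_le {P : ℝ} (hP : 0 < P) (K t t₀ : ℝ) :
    (P + K * (t - t₀)) * exp (-t ^ 2 / 2) ≤ P * exp (-t₀ ^ 2 / 2 + (K / P - t₀) ^ 2 / 2) := by
  have hlin : P + K * (t - t₀) ≤ P * exp (K / P * (t - t₀)) :=
    calc P + K * (t - t₀) = P * (K / P * (t - t₀) + 1) := by field_simp; ring
      _ ≤ P * exp (K / P * (t - t₀)) := by gcongr; exact add_one_le_exp _
  calc (P + K * (t - t₀)) * exp (-t ^ 2 / 2)
      ≤ P * exp (K / P * (t - t₀)) * exp (-t ^ 2 / 2) := by gcongr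
    _ = P * exp (-t₀ ^ 2 / 2 + (K / P - t₀) ^ 2 / 2 - (t - t₀ - (K / P - t₀)) ^ 2 / 2) := by
        rw [mul_assoc, ← exp_add]; ring_nf
    _ ≤ P * exp (-t₀ ^ 2 / 2 + (K / P - t₀) ^ 2 / 2) := by
        gcongr; linarith [sq_nonneg (t - t₀ - (K / P - t₀))]

/- The quantity inside `|·|` is the logarithmic derivative of `h β` at `t₀`. -/
lemma g_le_of_slope {β t₀ δ : ℝ} (hβ : 0 < β) (ht₀ : 0 < t₀)
    (hδ : |2 * β * exp (-(β * t₀) ^ 2 / 2) / gaussIntegral (β * t₀) - t₀| ≤ δ) :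
    g β ≤ 2 / √(2 * π) * gaussIntegral (β * t₀) * exp (-(t₀ ^ 2 - δ ^ 2) / 2) := by
  set P := gaussIntegral (β * t₀)
  set K := 2 * β * exp (-(β * t₀) ^ 2 / 2)
  have hP : 0 < P := gaussIntegral_pos (by positivity)
  refine g_le_of_forall_h_le fun t ht => ?_
  have htangent : gaussIntegral (β * t) ≤ P + K * (t - t₀) := by
    have := gaussIntegral_le_tangent (mul_nonneg hβ.le ht₀.le) (mul_nonneg hβ.le ht)
    linarith
  have hslope : (K / P - t₀) ^ 2 ≤ δ ^ 2 := sq_le_sq.2 (hδ.trans (le_abs_self δ))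
  calc h β t ≤ 2 / √(2 * π) * ((P + K * (t - t₀)) * exp (-t ^ 2 / 2)) := by
        rw [h_eq, mul_assoc]; gcongr
    _ ≤ 2 / √(2 * π) * (P * exp (-t₀ ^ 2 / 2 + (K / P - t₀) ^ 2 / 2)) :=
        mul_le_mul_of_nonneg_left (affine_mul_exp_neg_sq_half_le hP K t t₀) (by positivity)
    _ ≤ 2 / √(2 * π) * P * exp (-(t₀ ^ 2 - δ ^ 2) / 2) := by
        rw [mul_assoc]; gcongr; linarith

/- `0.828` is the maximiser of `h 1.263282` to three digits; the slope there is about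
`-3 · 10⁻⁵`. -/
lemma g_lt_one : g 1.263282 < 1 := by
  have hs : (2.5066282746 : ℝ) ≤ √(2 * π) :=
    (le_sqrt (by norm_num) (by positivity)).2 (by nlinarith [pi_gt_d20])
  have hI_up := gaussIntegral_le_gaussTaylor 6 (u := 1.263282 * 0.828) (by norm_num)
  have hdecay := exp_neg_le_sum_range_odd 6 (y := (0.828 ^ 2 - (1 / 20000) ^ 2) / 2) (by norm_num)
  have hslope : |2 * 1.263282 * exp (-(1.263282 * 0.828) ^ 2 / 2)
      / gaussIntegral (1.263282 * 0.828) - 0.828| ≤ (1 / 20000 : ℝ) := by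
    have hI_lo := gaussTaylor_le_gaussIntegral 6 (u := 1.263282 * 0.828) (by norm_num)
    have hE_up := exp_neg_le_sum_range_odd 6 (y := (1.263282 * 0.828) ^ 2 / 2) (by positivity)
    have hE_lo := sum_range_even_le_exp_neg 6 (y := (1.263282 * 0.828) ^ 2 / 2) (by positivity)
    have hpos : 0 < gaussIntegral (1.263282 * 0.828) := gaussIntegral_pos (by norm_num)
    rw [neg_div, abs_le, le_sub_iff_add_le, sub_le_iff_le_add, le_div_iff₀ hpos, div_le_iff₀ hpos]
    norm_num [gaussTaylor, sum_range_succ, Nat.factorial] at hI_up hI_lo hE_up hE_lo ⊢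
    constructor <;> linarith
  calc g 1.263282 ≤ 2 / √(2 * π) * gaussIntegral (1.263282 * 0.828)
        * exp (-(0.828 ^ 2 - (1 / 20000) ^ 2) / 2) :=
        g_le_of_slope (by norm_num) (by norm_num) hslope
    _ ≤ 2 / 2.5066282746 * (2 * gaussTaylor (2 * 6 + 1) (1.263282 * 0.828))
        * ∑ k ∈ range (2 * 6 + 1), (-((0.828 ^ 2 - (1 / 20000) ^ 2) / 2 : ℝ)) ^ k / k ! := by
      rw [neg_div]
      gcongr
      · norm_num [gaussTaylor, sum_range_succ, Nat.factorial]
      · exact (gaussIntegral_pos (by norm_num)).le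
    _ < 1 := by norm_num [gaussTaylor, sum_range_succ, Nat.factorial]

lemma one_lt_g : 1 < g 1.263283 := by
  have hs : √(2 * π) ≤ 2.5066282747 := (sqrt_le_left (by norm_num)).2 (by nlinarith [pi_lt_d20])
  have hI := gaussTaylor_le_gaussIntegral 6 (u := 1.263283 * 0.828) (by norm_num)
  have hdecay := sum_range_even_le_exp_neg 6 (y := 0.828 ^ 2 / 2) (by norm_num)
  calc 1 < 2 / 2.5066282747 * (2 * gaussTaylor (2 * 6) (1.263283 * 0.828))
        * ∑ k ∈ range (2 * 6), (-(0.828 ^ 2 / 2 : ℝ)) ^ k / k ! := by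
        norm_num [gaussTaylor, sum_range_succ, Nat.factorial]
    _ ≤ 2 / √(2 * π) * gaussIntegral (1.263283 * 0.828) * exp (-(0.828 ^ 2 / 2)) := by
        gcongr
        · exact mul_nonneg (by positivity) (gaussIntegral_pos (by norm_num)).le
        · norm_num [gaussTaylor, sum_range_succ, Nat.factorial]
    _ = h 1.263283 0.828 := by rw [h_eq, neg_div]
    _ ≤ g 1.263283 := h_le_g (by norm_num) (by norm_num)

theorem exists_beta_zero :
    ∃ β₀ : ℝ, 1.263282 < β₀ ∧ β₀ < 1.263283 ∧ g β₀ = 1 := by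
  have hcont : ContinuousOn g (Icc 1.263282 1.263283) :=
    lipschitzOnWith_g.continuousOn.mono fun β hβ => le_trans (by norm_num) hβ.1
  obtain ⟨β₀, ⟨hlo, hhi⟩, hβ₀⟩ :=
    intermediate_value_Ioo (by norm_num) hcont ⟨g_lt_one, one_lt_g⟩
  exact ⟨β₀, hlo, hhi, hβ₀⟩
end
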